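/- Let q, α_0, α_1, α_2, α_3 be complex numbers with 0 < |q| < 1 and α_0·q^m ≠ 1 and α_0α_1α_2·q^m ≠ 1 for all integers m ≥ 0. Define the entire functions x_0(t) = ₂φ₂[α_0α_1, α_0α_1α_2α_3; α_0, α_0α_1α_2; q, qα_0t], x_1(t) = ((1−q)α_0/(1−α_0))·₂φ₂[α_0α_1, α_0α_1α_2α_3; qα_0, α_0α_1α_2; q, q²α_0t], x_2(t) = ((1−q)α_0(1−α_0α_1)/((1−α_0)(1−α_0α_1α_2)))·₂φ₂[qα_0α_1, α_0α_1α_2α_3; qα_0, qα_0α_1α_2; q, q²α_0t]. Then for every t ∈ ℂ the vector x(t) = (x_0(t), x_1(t), x_2(t))ᵀ satisfies x(q^{-1}t) = (A_0 + tA_1)·x(t), where A_0 = [[1, 0, 0], [(1−q)α_0, α_0, 0], [(1−q)α_0, α_0(1−α_1), α_0α_1α_2]] and A_1 = [[−α_0, −α_0(1−α_1)/(1−q), −α_0α_1α_2(1−α_3)/(1−q)], [0,0,0], [0,0,0]]. (This yields the particular solution, in terms of ₂φ₂, of the degenerate q-Garnier system attached to the quiver Q_11.) -/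

import Mathlib

noncomputable section

/-- The `q`-Pochhammer symbol `(a;q)_n = Π_{k=1}^{n} (1 - a q^{k-1})`. -/
def qPoch (q a : ℂ) (n : ℕ) : ℂ := ∏ k ∈ Finset.range n, (1 - a * q ^ k)

/-- The basic hypergeometric series `₂φ₂[a₁,a₂; b₁,b₂; q, t]`. -/
def phi22 (a1 a2 b1 b2 q t : ℂ) : ℂ :=
  ∑' n : ℕ, (qPoch q a1 n * qPoch q a2 n) /
    (qPoch q b1 n * qPoch q b2 n * qPoch q q n) *
    (-1) ^ n * q ^ (n * (n - 1) / 2) * t ^ n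

/-- `x₀(t)` of the hypergeometric solution attached to the quiver `Q_11`. -/
def W0 (q a0 a1 a2 a3 t : ℂ) : ℂ :=
  phi22 (a0 * a1) (a0 * a1 * a2 * a3) a0 (a0 * a1 * a2) q (q * a0 * t)

/-- `x₁(t)` of the hypergeometric solution attached to the quiver `Q_11`. -/
def W1 (q a0 a1 a2 a3 t : ℂ) : ℂ :=
  (1 - q) * a0 / (1 - a0) *
    phi22 (a0 * a1) (a0 * a1 * a2 * a3) (q * a0) (a0 * a1 * a2) q (q ^ 2 * a0 * t)

/-- `x₂(t)` of the hypergeometric solution attached to the quiver `Q_11`. -/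
def W2 (q a0 a1 a2 a3 t : ℂ) : ℂ :=
  (1 - q) * a0 * (1 - a0 * a1) / ((1 - a0) * (1 - a0 * a1 * a2)) *
    phi22 (q * a0 * a1) (a0 * a1 * a2 * a3) (q * a0) (q * a0 * a1 * a2) q (q ^ 2 * a0 * t)

/-!
Expanding every `₂φ₂` as a power series in `t`, the relations
`(b;q)ₙ (1 - b qⁿ) = (1 - b) (qb;q)ₙ` turn the coefficients of `(1 - α₀)(1 - α₀α₁α₂) xᵢ(t)`
into one common sequence `cₙ` (the coefficients of `₂φ₂[α₀α₁, α₀α₁α₂α₃; qα₀, qα₀α₁α₂]`) times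
factors linear in `qⁿ`. The equations for `x₁` and `x₂` then hold coefficientwise as polynomial
identities in `qⁿ`; the equation for `x₀` compares the coefficient of `tⁿ⁺¹` on both sides, which
is exactly the two-term recurrence of `cₙ`.
-/

open Filter Topology

section QPochhammer

variable (q a : ℂ)

theorem qPoch_succ (n : ℕ) : qPoch q a (n + 1) = qPoch q a n * (1 - a * q ^ n) :=
  Finset.prod_range_succ _ _

theorem qPoch_succ' (n : ℕ) : qPoch q a (n + 1) = (1 - a) * qPoch q (q * a) n := by
  simp only [qPoch, Finset.prod_range_succ', pow_succ, pow_zero, mul_one, mul_comm q, mul_assoc]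
  exact mul_comm _ _

variable {q a}

theorem one_sub_mul_pow_ne_zero (ha : ∀ k : ℕ, a * q ^ k ≠ 1) (n : ℕ) :
    1 - a * q ^ n ≠ 0 :=
  sub_ne_zero.2 (ha n).symm

theorem one_sub_ne_zero_of_mul_pow_ne_one (ha : ∀ k : ℕ, a * q ^ k ≠ 1) : 1 - a ≠ 0 := by
  simpa using one_sub_mul_pow_ne_zero ha 0

theorem qPoch_ne_zero (ha : ∀ k : ℕ, a * q ^ k ≠ 1) (n : ℕ) : qPoch q a n ≠ 0 :=
  Finset.prod_ne_zero_iff.2 fun k _ => one_sub_mul_pow_ne_zero ha k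

theorem mul_pow_ne_one_of_norm_lt_one (hq : ‖q‖ < 1) (k : ℕ) : q * q ^ k ≠ 1 := by
  rw [← pow_succ']
  exact fun h => (pow_lt_one₀ (norm_nonneg q) hq k.succ_ne_zero).ne
    (by rw [← norm_pow, h, norm_one])

end QPochhammer

/-- The coefficient of `tⁿ` in `phi22 a1 a2 b1 b2 q t`. -/
def phiCoeff (a1 a2 b1 b2 q : ℂ) (n : ℕ) : ℂ :=
  (qPoch q a1 n * qPoch q a2 n) / (qPoch q b1 n * qPoch q b2 n * qPoch q q n) *
    (-1) ^ n * q ^ (n * (n - 1) / 2)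

section PhiCoeff

variable (a1 a2 b1 b2 q : ℂ)

theorem phiCoeff_succ (n : ℕ) :
    phiCoeff a1 a2 b1 b2 q (n + 1) = phiCoeff a1 a2 b1 b2 q n *
      ((1 - a1 * q ^ n) * (1 - a2 * q ^ n) /
        ((1 - b1 * q ^ n) * (1 - b2 * q ^ n) * (1 - q * q ^ n)) * -q ^ n) := by
  simp only [phiCoeff, qPoch_succ, Nat.triangle_succ, pow_add, pow_succ, div_eq_mul_inv, mul_inv]
  ring

theorem phiCoeff_succ_mul (n : ℕ)
    (h : (1 - b1 * q ^ n) * (1 - b2 * q ^ n) * (1 - q * q ^ n) ≠ 0) :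
    phiCoeff a1 a2 b1 b2 q (n + 1) * ((1 - b1 * q ^ n) * (1 - b2 * q ^ n) * (1 - q * q ^ n)) =
      -q ^ n * phiCoeff a1 a2 b1 b2 q n * (1 - a1 * q ^ n) * (1 - a2 * q ^ n) := by
  rw [phiCoeff_succ]
  linear_combination (-q ^ n * phiCoeff a1 a2 b1 b2 q n) *
    div_mul_cancel₀ ((1 - a1 * q ^ n) * (1 - a2 * q ^ n)) h

theorem phiCoeff_comm_b (n : ℕ) : phiCoeff a1 a2 b1 b2 q n = phiCoeff a1 a2 b2 b1 q n := by
  simp only [phiCoeff, mul_comm (qPoch q b1 n)]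

theorem one_sub_mul_phiCoeff_shift_a1 (n : ℕ) :
    (1 - a1) * phiCoeff (q * a1) a2 b1 b2 q n = (1 - a1 * q ^ n) * phiCoeff a1 a2 b1 b2 q n := by
  simp only [phiCoeff, mul_div_assoc]
  linear_combination
    (qPoch q a2 n / (qPoch q b1 n * qPoch q b2 n * qPoch q q n) * (-1) ^ n *
      q ^ (n * (n - 1) / 2)) * ((qPoch_succ' q a1 n).symm.trans (qPoch_succ q a1 n))

variable {b1} in
theorem one_sub_mul_phiCoeff_shift_b1 (hb : ∀ k : ℕ, b1 * q ^ k ≠ 1) (n : ℕ) :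
    (1 - b1) * phiCoeff a1 a2 b1 b2 q n = (1 - b1 * q ^ n) * phiCoeff a1 a2 (q * b1) b2 q n := by
  have hP : qPoch q b1 n = (1 - b1) * qPoch q (q * b1) n / (1 - b1 * q ^ n) :=
    eq_div_of_mul_eq (one_sub_mul_pow_ne_zero hb n)
      ((qPoch_succ q b1 n).symm.trans (qPoch_succ' q b1 n))
  have h1 : (1 - b1) * (1 - b1)⁻¹ = 1 := mul_inv_cancel₀ (one_sub_ne_zero_of_mul_pow_ne_one hb)
  simp only [phiCoeff, hP, div_eq_mul_inv, mul_inv, inv_inv]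
  linear_combination (1 - b1 * q ^ n) * qPoch q a1 n * qPoch q a2 n * (qPoch q (q * b1) n)⁻¹
    * (qPoch q b2 n)⁻¹ * (qPoch q q n)⁻¹ * (-1) ^ n * q ^ (n * (n - 1) / 2) * h1

variable {b2} in
theorem one_sub_mul_phiCoeff_shift_b2 (hb : ∀ k : ℕ, b2 * q ^ k ≠ 1) (n : ℕ) :
    (1 - b2) * phiCoeff a1 a2 b1 b2 q n = (1 - b2 * q ^ n) * phiCoeff a1 a2 b1 (q * b2) q n := by
  rw [phiCoeff_comm_b, one_sub_mul_phiCoeff_shift_b1 _ _ _ _ hb, phiCoeff_comm_b]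

theorem summable_phiCoeff_mul_pow (hq : ‖q‖ < 1) (t : ℂ) :
    Summable fun n => phiCoeff a1 a2 b1 b2 q n * t ^ n := by
  set ρ : ℂ → ℂ := fun x =>
    (1 - a1 * x) * (1 - a2 * x) / ((1 - b1 * x) * (1 - b2 * x) * (1 - q * x)) * -x * t
  have hρ : Tendsto (fun n => ρ (q ^ n)) atTop (𝓝 0) := by
    have hcont : ContinuousAt ρ 0 :=
      ((ContinuousAt.div (by fun_prop) (by fun_prop) (by simp)).mul (by fun_prop)).mul
        (by fun_prop)
    simpa only [ρ, Function.comp_def, mul_zero, zero_mul, neg_zero] using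
      hcont.tendsto.comp (tendsto_pow_atTop_nhds_zero_of_norm_lt_one hq)
  refine summable_of_ratio_norm_eventually_le (r := 1 / 2) (by norm_num) ?_
  filter_upwards [hρ.norm.eventually (ge_mem_nhds (by norm_num : ‖(0 : ℂ)‖ < 1 / 2))] with n hn
  have hratio : phiCoeff a1 a2 b1 b2 q (n + 1) * t ^ (n + 1) =
      phiCoeff a1 a2 b1 b2 q n * t ^ n * ρ (q ^ n) := by
    rw [phiCoeff_succ]; ring
  rw [hratio, norm_mul, mul_comm]
  exact mul_le_mul_of_nonneg_right hn (norm_nonneg _)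

theorem hasSum_phi22 (hq : ‖q‖ < 1) (t : ℂ) :
    HasSum (fun n => phiCoeff a1 a2 b1 b2 q n * t ^ n) (phi22 a1 a2 b1 b2 q t) :=
  (summable_phiCoeff_mul_pow a1 a2 b1 b2 q hq t).hasSum

end PhiCoeff

def q11Coeff (q a0 a1 a2 a3 : ℂ) (n : ℕ) : ℂ :=
  phiCoeff (a0 * a1) (a0 * a1 * a2 * a3) (q * a0) (q * a0 * a1 * a2) q n

section Q11

variable {q a0 a1 a2 : ℂ} (a3 : ℂ) (hq : ‖q‖ < 1)
  (ha0 : ∀ m : ℕ, a0 * q ^ m ≠ 1) (ha012 : ∀ m : ℕ, a0 * a1 * a2 * q ^ m ≠ 1)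
include hq ha0 ha012

theorem hasSum_W0 (t : ℂ) :
    HasSum (fun n => q11Coeff q a0 a1 a2 a3 n * (1 - a0 * q ^ n) * (1 - a0 * a1 * a2 * q ^ n)
      * (q * a0 * t) ^ n) ((1 - a0) * (1 - a0 * a1 * a2) * W0 q a0 a1 a2 a3 t) := by
  refine ((hasSum_phi22 _ _ _ _ _ hq _).mul_left _).congr_fun fun n => ?_
  have e1 := one_sub_mul_phiCoeff_shift_b1 (a0 * a1) (a0 * a1 * a2 * a3) (a0 * a1 * a2) q ha0 n
  have e2 := one_sub_mul_phiCoeff_shift_b2 (a0 * a1) (a0 * a1 * a2 * a3) (q * a0) q ha012 n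
  rw [show q * (a0 * a1 * a2) = q * a0 * a1 * a2 by ring] at e2
  rw [q11Coeff]
  linear_combination (-(1 - a0 * a1 * a2) * (q * a0 * t) ^ n) * e1
    - ((1 - a0 * q ^ n) * (q * a0 * t) ^ n) * e2

theorem hasSum_W1 (t : ℂ) :
    HasSum (fun n => (1 - q) * a0 * q11Coeff q a0 a1 a2 a3 n * (1 - a0 * a1 * a2 * q ^ n)
      * (q ^ 2 * a0 * t) ^ n) ((1 - a0) * (1 - a0 * a1 * a2) * W1 q a0 a1 a2 a3 t) := by
  have h1 := one_sub_ne_zero_of_mul_pow_ne_one ha0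
  have hval : (1 - a0) * (1 - a0 * a1 * a2) * W1 q a0 a1 a2 a3 t = (1 - q) * a0 *
      ((1 - a0 * a1 * a2) *
        phi22 (a0 * a1) (a0 * a1 * a2 * a3) (q * a0) (a0 * a1 * a2) q (q ^ 2 * a0 * t)) := by
    rw [W1]; field_simp
  rw [hval]
  refine (((hasSum_phi22 _ _ _ _ _ hq _).mul_left _).mul_left _).congr_fun fun n => ?_
  have e2 := one_sub_mul_phiCoeff_shift_b2 (a0 * a1) (a0 * a1 * a2 * a3) (q * a0) q ha012 n
  rw [show q * (a0 * a1 * a2) = q * a0 * a1 * a2 by ring] at e2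
  rw [q11Coeff]
  linear_combination (-(1 - q) * a0 * (q ^ 2 * a0 * t) ^ n) * e2

theorem hasSum_W2 (t : ℂ) :
    HasSum (fun n => (1 - q) * a0 * q11Coeff q a0 a1 a2 a3 n * (1 - a0 * a1 * q ^ n)
      * (q ^ 2 * a0 * t) ^ n) ((1 - a0) * (1 - a0 * a1 * a2) * W2 q a0 a1 a2 a3 t) := by
  have h1 := one_sub_ne_zero_of_mul_pow_ne_one ha0
  have h2 := one_sub_ne_zero_of_mul_pow_ne_one ha012
  have hval : (1 - a0) * (1 - a0 * a1 * a2) * W2 q a0 a1 a2 a3 t = (1 - q) * a0 *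
      ((1 - a0 * a1) * phi22 (q * a0 * a1) (a0 * a1 * a2 * a3) (q * a0) (q * a0 * a1 * a2) q
        (q ^ 2 * a0 * t)) := by
    rw [W2]; field_simp
  rw [hval]
  refine (((hasSum_phi22 _ _ _ _ _ hq _).mul_left _).mul_left _).congr_fun fun n => ?_
  have e := one_sub_mul_phiCoeff_shift_a1 (a0 * a1) (a0 * a1 * a2 * a3) (q * a0)
    (q * a0 * a1 * a2) q n
  rw [show q * (a0 * a1) = q * a0 * a1 by ring] at e
  rw [q11Coeff]
  linear_combination (-(1 - q) * a0 * (q ^ 2 * a0 * t) ^ n) * e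

theorem q11Coeff_succ_mul (n : ℕ) :
    q11Coeff q a0 a1 a2 a3 (n + 1) *
        ((1 - a0 * q ^ (n + 1)) * (1 - a0 * a1 * a2 * q ^ (n + 1)) * (1 - q ^ (n + 1))) =
      -q ^ n * q11Coeff q a0 a1 a2 a3 n * (1 - a0 * a1 * q ^ n) *
        (1 - a0 * a1 * a2 * a3 * q ^ n) := by
  have hne : ∀ {b : ℂ}, (∀ m : ℕ, b * q ^ m ≠ 1) → 1 - q * b * q ^ n ≠ 0 := fun hb => by
    convert one_sub_mul_pow_ne_zero hb (n + 1) using 2; ring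
  have hrec := phiCoeff_succ_mul (a0 * a1) (a0 * a1 * a2 * a3) (q * a0) (q * a0 * a1 * a2) q n
    (mul_ne_zero (mul_ne_zero (hne ha0) (by simpa only [mul_assoc] using hne ha012))
      (one_sub_mul_pow_ne_zero (mul_pow_ne_one_of_norm_lt_one hq) n))
  rw [q11Coeff, q11Coeff]
  linear_combination hrec

theorem W0_q_inv_mul (hq0 : q ≠ 0) (t : ℂ) :
    W0 q a0 a1 a2 a3 (q⁻¹ * t) =
      W0 q a0 a1 a2 a3 t
        + t * (-a0 * W0 q a0 a1 a2 a3 t - a0 * (1 - a1) / (1 - q) * W1 q a0 a1 a2 a3 t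
            - a0 * a1 * a2 * (1 - a3) / (1 - q) * W2 q a0 a1 a2 a3 t) := by
  set K := (1 - a0) * (1 - a0 * a1 * a2)
  set f : ℕ → ℂ := fun n => q11Coeff q a0 a1 a2 a3 n * (1 - a0 * q ^ n) *
    (1 - a0 * a1 * a2 * q ^ n) * ((a0 * t) ^ n - (q * a0 * t) ^ n) with hf_def
  have hf : HasSum f (K * W0 q a0 a1 a2 a3 (q⁻¹ * t) - K * W0 q a0 a1 a2 a3 t) := by
    refine ((hasSum_W0 a3 hq ha0 ha012 _).sub (hasSum_W0 a3 hq ha0 ha012 t)).congr_fun fun n => ?_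
    rw [show q * a0 * (q⁻¹ * t) = a0 * t by field_simp]
    ring
  have hL := (hasSum_nat_add_iff' 1).mpr hf
  simp only [Finset.range_one, Finset.sum_singleton, hf_def, sub_self, mul_zero, pow_zero] at hL
  have hR : HasSum (fun n => f (n + 1)) (t * (-a0 * (K * W0 q a0 a1 a2 a3 t)
      - a0 * (1 - a1) / (1 - q) * (K * W1 q a0 a1 a2 a3 t)
      - a0 * a1 * a2 * (1 - a3) / (1 - q) * (K * W2 q a0 a1 a2 a3 t))) := by
    refine (((((hasSum_W0 a3 hq ha0 ha012 t).mul_left _).sub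
      ((hasSum_W1 a3 hq ha0 ha012 t).mul_left _)).sub
      ((hasSum_W2 a3 hq ha0 ha012 t).mul_left _)).mul_left t).congr_fun fun n => ?_
    have h1q : (1 - q) * (1 - q)⁻¹ = 1 := mul_inv_cancel₀ (by
      simpa using one_sub_mul_pow_ne_zero (mul_pow_ne_one_of_norm_lt_one hq) 0)
    simp only [hf_def, div_eq_mul_inv]
    linear_combination (a0 * t) ^ (n + 1) * q11Coeff_succ_mul a3 hq ha0 ha012 n
      + t * a0 * q11Coeff q a0 a1 a2 a3 n * (q ^ 2 * a0 * t) ^ n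
        * (a0 * (1 - a1) * (1 - a0 * a1 * a2 * q ^ n)
          + a0 * a1 * a2 * (1 - a3) * (1 - a0 * a1 * q ^ n)) * h1q
  apply mul_left_cancel₀ (mul_ne_zero (one_sub_ne_zero_of_mul_pow_ne_one ha0)
    (one_sub_ne_zero_of_mul_pow_ne_one ha012))
  linear_combination hL.unique hR

theorem W1_q_inv_mul (hq0 : q ≠ 0) (t : ℂ) :
    W1 q a0 a1 a2 a3 (q⁻¹ * t) = (1 - q) * a0 * W0 q a0 a1 a2 a3 t + a0 * W1 q a0 a1 a2 a3 t := by
  have hR := ((hasSum_W0 a3 hq ha0 ha012 t).mul_left ((1 - q) * a0)).add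
    ((hasSum_W1 a3 hq ha0 ha012 t).mul_left a0)
  refine mul_left_cancel₀ (mul_ne_zero (one_sub_ne_zero_of_mul_pow_ne_one ha0)
    (one_sub_ne_zero_of_mul_pow_ne_one ha012)) (((hasSum_W1 a3 hq ha0 ha012 _).unique
      (hR.congr_fun fun n => ?_)).trans (by ring))
  rw [show q ^ 2 * a0 * (q⁻¹ * t) = q * a0 * t by field_simp]
  ring

theorem W2_q_inv_mul (hq0 : q ≠ 0) (t : ℂ) :
    W2 q a0 a1 a2 a3 (q⁻¹ * t) = (1 - q) * a0 * W0 q a0 a1 a2 a3 t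
      + a0 * (1 - a1) * W1 q a0 a1 a2 a3 t + a0 * a1 * a2 * W2 q a0 a1 a2 a3 t := by
  have hR := (((hasSum_W0 a3 hq ha0 ha012 t).mul_left ((1 - q) * a0)).add
    ((hasSum_W1 a3 hq ha0 ha012 t).mul_left (a0 * (1 - a1)))).add
    ((hasSum_W2 a3 hq ha0 ha012 t).mul_left (a0 * a1 * a2))
  refine mul_left_cancel₀ (mul_ne_zero (one_sub_ne_zero_of_mul_pow_ne_one ha0)
    (one_sub_ne_zero_of_mul_pow_ne_one ha012)) (((hasSum_W2 a3 hq ha0 ha012 _).unique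
      (hR.congr_fun fun n => ?_)).trans (by ring))
  rw [show q ^ 2 * a0 * (q⁻¹ * t) = q * a0 * t by field_simp]
  ring

end Q11

/-- The vector `x(t) = (x₀(t), x₁(t), x₂(t))ᵀ` built from `₂φ₂` series
satisfies the linear `q`-difference system `x(q⁻¹t) = (A₀ + tA₁) x(t)` of the degenerate
`q`-Garnier system attached to the quiver `Q_11`, for every `t ∈ ℂ`. -/
theorem phi22_solves_Q11_linear_system (q a0 a1 a2 a3 : ℂ)
    (hq0 : 0 < ‖q‖) (hq1 : ‖q‖ < 1)
    (hres : ∀ m : ℕ, a0 * q ^ m ≠ 1 ∧ a0 * a1 * a2 * q ^ m ≠ 1) :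
    ∀ t : ℂ,
      (W0 q a0 a1 a2 a3 (q⁻¹ * t) =
        W0 q a0 a1 a2 a3 t
          + t * (-a0 * W0 q a0 a1 a2 a3 t - a0 * (1 - a1) / (1 - q) * W1 q a0 a1 a2 a3 t
              - a0 * a1 * a2 * (1 - a3) / (1 - q) * W2 q a0 a1 a2 a3 t)) ∧
      (W1 q a0 a1 a2 a3 (q⁻¹ * t) =
        (1 - q) * a0 * W0 q a0 a1 a2 a3 t + a0 * W1 q a0 a1 a2 a3 t) ∧
      (W2 q a0 a1 a2 a3 (q⁻¹ * t) =
        (1 - q) * a0 * W0 q a0 a1 a2 a3 t + a0 * (1 - a1) * W1 q a0 a1 a2 a3 t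
          + a0 * a1 * a2 * W2 q a0 a1 a2 a3 t) := by
  have hq : q ≠ 0 := norm_pos_iff.1 hq0
  have ha0 : ∀ m : ℕ, a0 * q ^ m ≠ 1 := fun m => (hres m).1
  have ha012 : ∀ m : ℕ, a0 * a1 * a2 * q ^ m ≠ 1 := fun m => (hres m).2
  exact fun t => ⟨W0_q_inv_mul a3 hq1 ha0 ha012 hq t, W1_q_inv_mul a3 hq1 ha0 ha012 hq t,
    W2_q_inv_mul a3 hq1 ha0 ha012 hq t⟩
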